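/- For each fixed integer m ≥ 3, the limit lim_{n→∞} G_{m̄×n̄}(1)^{1/(mn)} (over the torus) exists and equals lim_{n→∞} G_{m̄×n}(1)^{1/(mn)} (over the cylinder); that is, the per-vertex growth rate of the number of dominating sets of the m×n torus equals the growth rate μ̄_m of the m×n cylinder as n → ∞. -/

import Mathlib

open scoped Classical

/-- `S` is a dominating set of `G`: every vertex is in `S` or adjacent to a vertex of `S`. -/
def IsDominating {V : Type*} (G : SimpleGraph V) (S : Finset V) : Prop :=
  ∀ v : V, v ∈ S ∨ ∃ u ∈ S, G.Adj u v

/-- The m×n cylinder graph `C_m □ P_n`. -/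
def cylinderGraph (m n : ℕ) : SimpleGraph (Fin m × Fin n) :=
  (SimpleGraph.cycleGraph m).boxProd (SimpleGraph.pathGraph n)

/-- The m×n torus graph `C_m □ C_n`. -/
def torusGraph (m n : ℕ) : SimpleGraph (Fin m × Fin n) :=
  (SimpleGraph.cycleGraph m).boxProd (SimpleGraph.cycleGraph n)

/-- `G_{m̄×n}(1)`: the total number of dominating sets of the m×n cylinder graph. -/
noncomputable def numDomCyl (m n : ℕ) : ℕ :=
  (Finset.univ.filter
    (fun S : Finset (Fin m × Fin n) => IsDominating (cylinderGraph m n) S)).card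

/-- `G_{m̄×n̄}(1)`: the total number of dominating sets of the m×n torus graph. -/
noncomputable def numDomTorus (m n : ℕ) : ℕ :=
  (Finset.univ.filter
    (fun S : Finset (Fin m × Fin n) => IsDominating (torusGraph m n) S)).card

/-!
Gluing two cylinders end to end shows that `n ↦ G_{m̄×n}(1)` is supermultiplicative, so by
Fekete's lemma its `n`-th root converges. The wrap-around edges of the torus only reach the two
end columns of the cylinder, so adding these columns turns a dominating set of the torus into one
of the cylinder; remembering the set's trace on the `2m` end vertices makes this injective, whence
`G_{m̄×n}(1) ≤ G_{m̄×n̄}(1) ≤ 4^m G_{m̄×n}(1)`, and `(4^m)^{1/n} → 1`.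
-/

open Finset SimpleGraph Filter Topology

section Domination

variable {V W : Type*}

theorem IsDominating.image {G : SimpleGraph V} {K : SimpleGraph W} (f : G →g K)
    (hf : Function.Surjective f) {S : Finset V} (hS : IsDominating G S) :
    IsDominating K (S.image f) := by
  intro w
  obtain ⟨v, rfl⟩ := hf w
  rcases hS v with hv | ⟨u, hu, huv⟩
  · exact Or.inl (mem_image_of_mem f hv)
  · exact Or.inr ⟨f u, mem_image_of_mem f hu, f.map_adj huv⟩

theorem IsDominating.disjSum {G : SimpleGraph V} {H : SimpleGraph W} {S : Finset V}
    {T : Finset W} (hS : IsDominating G S) (hT : IsDominating H T) :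
    IsDominating (G ⊕g H) (S.disjSum T) := by
  rintro (v | w)
  · rcases hS v with hv | ⟨u, hu, huv⟩
    · exact Or.inl (inl_mem_disjSum.2 hv)
    · exact Or.inr ⟨.inl u, inl_mem_disjSum.2 hu, huv⟩
  · rcases hT w with hw | ⟨u, hu, huw⟩
    · exact Or.inl (inr_mem_disjSum.2 hw)
    · exact Or.inr ⟨.inr u, inr_mem_disjSum.2 hu, huw⟩

theorem IsDominating.union_of_adj {G K : SimpleGraph V} {B S : Finset V}
    (h : ∀ u v, G.Adj u v → v ∉ B → K.Adj u v) (hS : IsDominating G S) :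
    IsDominating K (S ∪ B) := by
  intro v
  by_cases hv : v ∈ B
  · exact Or.inl (mem_union_right S hv)
  rcases hS v with hvS | ⟨u, hu, huv⟩
  · exact Or.inl (mem_union_left B hvS)
  · exact Or.inr ⟨u, mem_union_left B hu, h u v huv hv⟩

variable [Fintype V] [Fintype W]

noncomputable def numDominating (G : SimpleGraph V) : ℕ :=
  (univ.filter fun S : Finset V => IsDominating G S).card

theorem one_le_numDominating (G : SimpleGraph V) : 1 ≤ numDominating G :=
  card_pos.2 ⟨univ, mem_filter.2 ⟨mem_univ _, fun v => Or.inl (mem_univ v)⟩⟩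

theorem numDominating_le_two_pow_card (G : SimpleGraph V) :
    numDominating G ≤ 2 ^ Fintype.card V :=
  (card_filter_le _ _).trans_eq (by simp)

theorem numDominating_le_of_bijective {G : SimpleGraph V} {K : SimpleGraph W} (f : G →g K)
    (hf : Function.Bijective f) : numDominating G ≤ numDominating K :=
  card_le_card_of_injOn (Finset.image f)
    (fun S hS => by simpa using (mem_filter.1 hS).2.image f hf.2)
    (fun _ _ _ _ h => image_injective hf.1 h)

theorem numDominating_mono {G H : SimpleGraph V} (h : G ≤ H) :
    numDominating G ≤ numDominating H :=
  numDominating_le_of_bijective (Hom.ofLE h) Function.bijective_id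

theorem numDominating_mul_le_sum (G : SimpleGraph V) (H : SimpleGraph W) :
    numDominating G * numDominating H ≤ numDominating (G ⊕g H) := by
  rw [numDominating, numDominating, ← card_product]
  refine card_le_card_of_injOn (fun p => p.1.disjSum p.2) (fun p hp => ?_)
    (fun p _ q _ h => Prod.ext (disjSum_inj.1 h).1 (disjSum_inj.1 h).2)
  simp only [coe_product, Set.mem_prod, coe_filter, Set.mem_ofPred_eq, mem_univ, true_and] at hp
  simpa using hp.1.disjSum hp.2

theorem numDominating_le_mul_two_pow_card {G K : SimpleGraph V} (B : Finset V)
    (h : ∀ u v, G.Adj u v → v ∉ B → K.Adj u v) :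
    numDominating G ≤ numDominating K * 2 ^ B.card := by
  rw [numDominating, numDominating, ← card_powerset, ← card_product]
  refine card_le_card_of_injOn (fun S => (S ∪ B, S ∩ B)) (fun S hS => ?_) (fun S _ T _ hST => ?_)
  · simp only [coe_filter, mem_univ, true_and, Set.mem_ofPred_eq] at hS
    simp only [coe_product, Set.mem_prod, mem_coe, mem_filter, mem_univ, true_and, mem_powerset]
    exact ⟨hS.union_of_adj h, inter_subset_right⟩
  · simp only [Prod.mk.injEq] at hST
    rw [← sdiff_union_inter S B, ← sdiff_union_inter T B, ← union_sdiff_right, hST.1,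
      union_sdiff_right, hST.2]

end Domination

section Growth

theorem exists_tendsto_rpow_one_div_of_supermultiplicative {f : ℕ → ℝ} {C : ℝ}
    (hpos : ∀ n, 0 < f n) (hmul : ∀ a b, f a * f b ≤ f (a + b)) (hle : ∀ n, f n ≤ C ^ n) :
    ∃ L, Tendsto (fun n : ℕ => f n ^ ((1 : ℝ) / n)) atTop (𝓝 L) := by
  have hsub : Subadditive fun n => -Real.log (f n) := fun a b => by
    have := Real.log_le_log (mul_pos (hpos a) (hpos b)) (hmul a b)
    rw [Real.log_mul (hpos a).ne' (hpos b).ne'] at this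
    linarith
  have hbdd : BddBelow (Set.range fun n : ℕ => -Real.log (f n) / n) := by
    refine ⟨-|Real.log C|, ?_⟩
    rintro _ ⟨n, rfl⟩
    rcases Nat.eq_zero_or_pos n with rfl | hn
    · simp
    have hlog : Real.log (f n) ≤ n * Real.log C := by
      calc Real.log (f n) ≤ Real.log (C ^ n) := Real.log_le_log (hpos n) (hle n)
        _ = n * Real.log C := Real.log_pow C n
    dsimp only
    rw [neg_div, neg_le_neg_iff, div_le_iff₀ (by exact_mod_cast hn)]
    nlinarith [le_abs_self (Real.log C)]
  refine ⟨Real.exp (-hsub.lim),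
    ((Real.continuous_exp.tendsto _).comp (hsub.tendsto_lim hbdd).neg).congr fun n => ?_⟩
  simp only [Function.comp_apply, neg_div, neg_neg]
  rw [Real.rpow_def_of_pos (hpos n), mul_one_div]

theorem tendsto_rpow_one_div_of_le_of_le_mul {f g : ℕ → ℝ} {c L : ℝ} (hc : 0 < c)
    (hf0 : ∀ n, 0 ≤ f n) (hfg : ∀ n, f n ≤ g n) (hgf : ∀ n, g n ≤ f n * c)
    (hf : Tendsto (fun n : ℕ => f n ^ ((1 : ℝ) / n)) atTop (𝓝 L)) :
    Tendsto (fun n : ℕ => g n ^ ((1 : ℝ) / n)) atTop (𝓝 L) := by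
  have hc1 : Tendsto (fun n : ℕ => c ^ ((1 : ℝ) / n)) atTop (𝓝 1) := by
    simpa [Function.comp_def] using (Real.continuousAt_const_rpow hc.ne').tendsto.comp
      (tendsto_const_div_atTop_nhds_zero_nat 1)
  have hup := hf.mul hc1
  rw [mul_one] at hup
  refine tendsto_of_tendsto_of_tendsto_of_le_of_le hf hup
    (fun n => Real.rpow_le_rpow (hf0 n) (hfg n) (by positivity)) (fun n => ?_)
  rw [← Real.mul_rpow (hf0 n) hc.le]
  exact Real.rpow_le_rpow ((hf0 n).trans (hfg n)) (hgf n) (by positivity)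

theorem tendsto_rpow_one_div_mul_of_tendsto {f : ℕ → ℝ} {L : ℝ} (hf0 : ∀ n, 0 ≤ f n)
    (hf : Tendsto (fun n : ℕ => f n ^ ((1 : ℝ) / n)) atTop (𝓝 L)) (m : ℕ) :
    Tendsto (fun n : ℕ => f n ^ ((1 : ℝ) / (m * n : ℕ))) atTop (𝓝 (L ^ ((1 : ℝ) / m))) := by
  refine (hf.rpow_const (Or.inr (by positivity))).congr fun n => ?_
  rw [← Real.rpow_mul (hf0 n), one_div_mul_one_div, Nat.cast_mul, mul_comm]

end Growth

section Cylinder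

theorem pathGraph_adj_of_cycleGraph_adj {n : ℕ} {i j : Fin n} (h : (cycleGraph n).Adj i j)
    (hj₀ : j.val ≠ 0) (hj₁ : j.val + 1 ≠ n) : (pathGraph n).Adj i j := by
  have hdiff : ∀ a b : Fin n, (a - b).val = 1 →
      a.val = b.val + 1 ∨ (a.val = 0 ∧ b.val + 1 = n) := by
    intro a b hab
    rcases le_or_gt b a with hba | hab'
    · rw [Fin.coe_sub_iff_le.2 hba] at hab; omega
    · rw [Fin.coe_sub_iff_lt.2 hab'] at hab; omega
  rw [cycleGraph_adj'] at h
  rw [pathGraph_adj]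
  rcases h with h | h <;> rcases hdiff _ _ h with h | h <;> omega

def pathEnds (n : ℕ) : Finset (Fin n) :=
  univ.filter fun j => j.val = 0 ∨ j.val + 1 = n

theorem card_pathEnds_le (n : ℕ) : (pathEnds n).card ≤ 2 :=
  calc (pathEnds n).card ≤ ({0, n - 1} : Finset ℕ).card :=
        card_le_card_of_injOn Fin.val (fun j hj => by simp [pathEnds] at hj; simp; omega)
          Fin.val_injective.injOn
    _ ≤ 2 := card_le_two

theorem cylinderGraph_adj_of_torusGraph_adj {m n : ℕ} {u v : Fin m × Fin n}
    (h : (torusGraph m n).Adj u v) (hv : v.2 ∉ pathEnds n) : (cylinderGraph m n).Adj u v := by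
  simp only [pathEnds, mem_filter, mem_univ, true_and, not_or] at hv
  rw [torusGraph, boxProd_adj] at h
  rw [cylinderGraph, boxProd_adj]
  exact h.imp_right fun h => ⟨pathGraph_adj_of_cycleGraph_adj h.1 hv.1 hv.2, h.2⟩

def cylinderConcatEquiv (m a b : ℕ) : (Fin m × Fin a) ⊕ (Fin m × Fin b) ≃ Fin m × Fin (a + b) :=
  (Equiv.prodSumDistrib _ _ _).symm.trans ((Equiv.refl _).prodCongr finSumFinEquiv)

def cylinderConcatHom (m a b : ℕ) :
    cylinderGraph m a ⊕g cylinderGraph m b →g cylinderGraph m (a + b) where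
  toFun := cylinderConcatEquiv m a b
  map_rel' := by
    rintro (⟨i, j⟩ | ⟨i, j⟩) (⟨i', j'⟩ | ⟨i', j'⟩) h <;>
      simp_all [cylinderConcatEquiv, cylinderGraph, boxProd_adj, pathGraph_adj, add_assoc]

theorem numDomCyl_le_pow (m n : ℕ) : numDomCyl m n ≤ (2 ^ m) ^ n :=
  (numDominating_le_two_pow_card (cylinderGraph m n)).trans_eq (by simp [← pow_mul])

theorem numDomCyl_mul_le (m a b : ℕ) : numDomCyl m a * numDomCyl m b ≤ numDomCyl m (a + b) :=
  (numDominating_mul_le_sum _ _).trans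
    (numDominating_le_of_bijective (cylinderConcatHom m a b) (cylinderConcatEquiv m a b).bijective)

theorem numDomCyl_le_numDomTorus (m n : ℕ) : numDomCyl m n ≤ numDomTorus m n :=
  numDominating_mono fun _ _ h => by
    rw [cylinderGraph, boxProd_adj] at h
    rw [torusGraph, boxProd_adj]
    exact h.imp_right fun h => ⟨pathGraph_le_cycleGraph h.1, h.2⟩

theorem numDomTorus_le_mul (m n : ℕ) : numDomTorus m n ≤ numDomCyl m n * 4 ^ m :=
  calc numDomTorus m n ≤ numDomCyl m n * 2 ^ (univ ×ˢ pathEnds n).card :=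
        numDominating_le_mul_two_pow_card _ fun _ _ h hv =>
          cylinderGraph_adj_of_torusGraph_adj h (by simpa using hv)
    _ ≤ numDomCyl m n * 4 ^ m := by
        rw [card_product, card_univ, Fintype.card_fin, show 4 ^ m = 2 ^ (m * 2) by
          rw [pow_mul']; norm_num]
        gcongr
        · norm_num
        · exact card_pathEnds_le n

end Cylinder

theorem torus_growth_eq_cylinder_growth (m : ℕ) :
    ∃ L : ℝ,
      Filter.Tendsto (fun n : ℕ => (numDomTorus m n : ℝ) ^ ((1 : ℝ) / (m * n : ℕ)))
        Filter.atTop (nhds L) ∧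
      Filter.Tendsto (fun n : ℕ => (numDomCyl m n : ℝ) ^ ((1 : ℝ) / (m * n : ℕ)))
        Filter.atTop (nhds L) := by
  have hpos : ∀ n, (0 : ℝ) < numDomCyl m n := fun n => by
    exact_mod_cast one_le_numDominating (cylinderGraph m n)
  obtain ⟨L, hcyl⟩ := exists_tendsto_rpow_one_div_of_supermultiplicative (C := 2 ^ m) hpos
    (fun a b => by exact_mod_cast numDomCyl_mul_le m a b)
    (fun n => by exact_mod_cast numDomCyl_le_pow m n)
  have htorus := tendsto_rpow_one_div_of_le_of_le_mul (g := fun n => (numDomTorus m n : ℝ))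
    (c := 4 ^ m) (by positivity) (fun n => (hpos n).le)
    (fun n => by exact_mod_cast numDomCyl_le_numDomTorus m n)
    (fun n => by exact_mod_cast numDomTorus_le_mul m n) hcyl
  exact ⟨_, tendsto_rpow_one_div_mul_of_tendsto (fun _ => Nat.cast_nonneg _) htorus m,
    tendsto_rpow_one_div_mul_of_tendsto (fun _ => Nat.cast_nonneg _) hcyl m⟩
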